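/- arXiv:0901.0435 — 2 statements merged into one kernel-verified Lean document; each statement's English description precedes it below -/
import Mathlib

section
/- Let n be a positive integer and let b, d be real numbers with d > 0 and b > d + n - 1. Then the polynomial ₂F₁(-n, b; d; z) has exactly n zeros, all of which are real and simple and lie in the open interval (0, 1). -/
/-- The Pochhammer symbol `(x)_k = x (x+1) ⋯ (x+k-1)` for a real number `x`. -/
noncomputable def poch (x : ℝ) (k : ℕ) : ℝ := ∏ i ∈ Finset.range k, (x + i)

/-- The terminating Gauss hypergeometric polynomial `₂F₁(-n, b; d; z)`
    as a real polynomial in `z`. -/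
noncomputable def hypPoly (n : ℕ) (b d : ℝ) : Polynomial ℝ :=
  ∑ k ∈ Finset.range (n + 1),
    Polynomial.C ((poch (-(n : ℝ)) k * poch b k) / (poch d k * (Nat.factorial k))) *
      Polynomial.X ^ k

/-!
The argument is Rolle's theorem applied to a Rodrigues formula. For `k < A` and `k < B` the
function `F_k(z) = z^(A-k) (1-z)^(B-k) P_k(z)`, with `P_k = ₂F₁(-k, A+B-k+1; A-k+1; z)`,
satisfies `F_k' = (A-k) F_(k+1)` on `(0, 1)` (a contiguous relation of `₂F₁`), so `F_k` is,
up to a constant, the `k`-th derivative of `z^A (1-z)^B`. It vanishes at `0`, at `1` and at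
the zeros of `P_k`, so Rolle's theorem gives `P_(k+1)` at least one more zero in `(0, 1)` than
`P_k`. With `A = d+n-1` and `B = b-d` we reach `P_n = ₂F₁(-n, b; d; z)`, which therefore has
`n` zeros in `(0, 1)`; as it has degree `n`, these are all its complex roots.
-/

open Polynomial Set
open scoped Nat

lemma poch_zero (x : ℝ) : poch x 0 = 1 := Finset.prod_range_zero _

lemma poch_succ (x : ℝ) (k : ℕ) : poch x (k + 1) = poch x k * (x + k) :=
  Finset.prod_range_succ _ _

lemma poch_succ' (x : ℝ) (k : ℕ) : poch x (k + 1) = x * poch (x + 1) k := by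
  simp only [poch, Finset.prod_range_succ', Nat.cast_add, Nat.cast_one, add_assoc, add_zero,
    Nat.cast_zero, add_comm (1 : ℝ), mul_comm x]

lemma poch_pos {x : ℝ} (hx : 0 < x) (k : ℕ) : 0 < poch x k :=
  Finset.prod_pos fun _ _ => by positivity

lemma poch_neg_natCast_of_lt {n m : ℕ} (h : n < m) : poch (-n) m = 0 :=
  Finset.prod_eq_zero (Finset.mem_range.mpr h) (by simp)

lemma poch_neg_natCast_self_ne_zero (n : ℕ) : poch (-n) n ≠ 0 :=
  Finset.prod_ne_zero_iff.mpr fun i hi => by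
    have : (i : ℝ) < n := by exact_mod_cast Finset.mem_range.mp hi
    linarith

lemma coeff_hypPoly (n : ℕ) (b d : ℝ) (m : ℕ) :
    (hypPoly n b d).coeff m = poch (-n) m * poch b m / (poch d m * m !) := by
  simp only [hypPoly, finsetSum_coeff, coeff_C_mul, coeff_X_pow, mul_ite, mul_one, mul_zero,
    Finset.sum_ite_eq, Finset.mem_range]
  split_ifs with h
  · rfl
  · rw [poch_neg_natCast_of_lt (by omega), zero_mul, zero_div]

lemma coeff_hypPoly_self_ne_zero {b d : ℝ} (hb : 0 < b) (hd : 0 < d) (n : ℕ) :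
    (hypPoly n b d).coeff n ≠ 0 := by
  rw [coeff_hypPoly]
  have := poch_pos hd n
  exact div_ne_zero (mul_ne_zero (poch_neg_natCast_self_ne_zero n) (poch_pos hb n).ne')
    (by positivity)

lemma natDegree_hypPoly {b d : ℝ} (hb : 0 < b) (hd : 0 < d) (n : ℕ) :
    (hypPoly n b d).natDegree = n := by
  refine natDegree_eq_of_le_of_coeff_ne_zero ?_ (coeff_hypPoly_self_ne_zero hb hd n)
  refine natDegree_le_iff_coeff_eq_zero.mpr fun m hm => ?_
  rw [coeff_hypPoly, poch_neg_natCast_of_lt (by exact_mod_cast hm), zero_mul, zero_div]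

lemma hypPoly_ne_zero {b d : ℝ} (hb : 0 < b) (hd : 0 < d) (n : ℕ) : hypPoly n b d ≠ 0 :=
  fun h => coeff_hypPoly_self_ne_zero hb hd n (by rw [h, coeff_zero])

lemma coeff_X_mul_derivative {R : Type*} [CommSemiring R] (p : R[X]) (m : ℕ) :
    (X * derivative p).coeff m = m * p.coeff m := by
  rcases m with _ | m
  · simp
  · rw [coeff_X_mul, coeff_derivative, mul_comm]
    push_cast
    ring

lemma hypPoly_contiguous (k : ℕ) (u c : ℝ) (hc : 1 < c) :
    C (c - 1) * hypPoly (k + 1) (u - 1) (c - 1) =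
      (C (c - 1) - C (u - k - 1) * X) * hypPoly k u c +
        X * (1 - X) * derivative (hypPoly k u c) := by
  set P := hypPoly k u c
  have hc₀ : 0 < c := by linarith
  rw [show (C (c - 1) - C (u - k - 1) * X) * P + X * (1 - X) * derivative P =
    C (c - 1) * P + X * derivative P - X * (C (u - k - 1) * P + X * derivative P) by ring]
  ext m
  rcases m with _ | m
  · simp [P, coeff_hypPoly, poch_zero]
  · have hm : c + m ≠ 0 := by positivity
    have hpoch := poch_pos hc₀ m
    have hc₁ : c - 1 ≠ 0 := by linarith
    rw [coeff_sub, coeff_add, coeff_X_mul_derivative, coeff_X_mul, coeff_add,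
      coeff_X_mul_derivative]
    simp only [coeff_C_mul, P, coeff_hypPoly]
    rw [show -((k + 1 : ℕ) : ℝ) = -k - 1 by push_cast; ring]
    simp only [poch_succ' (-k - 1), poch_succ' (u - 1), poch_succ' (c - 1), sub_add_cancel,
      poch_succ, Nat.factorial_succ]
    field_simp
    push_cast
    ring

noncomputable def rodriguesPoly (A B : ℝ) (k : ℕ) : ℝ[X] :=
  hypPoly k (A + B - k + 1) (A - k + 1)

noncomputable def rodriguesFun (A B : ℝ) (k : ℕ) (z : ℝ) : ℝ :=
  z ^ (A - k) * (1 - z) ^ (B - k) * (rodriguesPoly A B k).eval z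

lemma rodriguesPoly_succ {A : ℝ} (B : ℝ) {k : ℕ} (hk : k < A) :
    C (A - k) * rodriguesPoly A B (k + 1) =
      (C (A - k) - C (A + B - 2 * k) * X) * rodriguesPoly A B k +
        X * (1 - X) * derivative (rodriguesPoly A B k) := by
  have h := hypPoly_contiguous k (A + B - k + 1) (A - k + 1) (by linarith)
  simp only [rodriguesPoly, Nat.cast_succ]
  convert h using 3 <;> ring_nf

lemma hasDerivAt_rodriguesFun {A : ℝ} (B : ℝ) {k : ℕ} (hk : k < A) {z : ℝ}
    (hz : z ∈ Ioo (0 : ℝ) 1) :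
    HasDerivAt (rodriguesFun A B k) ((A - k) * rodriguesFun A B (k + 1) z) z := by
  obtain ⟨hz₀, hz₁⟩ := hz
  have hz₁' : 1 - z ≠ 0 := by linarith
  have hP := (rodriguesPoly A B k).hasDerivAt z
  have hzA := Real.hasDerivAt_rpow_const (p := A - k) (Or.inl hz₀.ne')
  have hzB := (Real.hasDerivAt_rpow_const (p := B - k) (Or.inl hz₁')).comp z
    ((hasDerivAt_id z).const_sub 1)
  refine ((hzA.mul hzB).mul hP).congr_deriv ?_
  have hrec := congrArg (eval z) (rodriguesPoly_succ B hk)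
  simp only [eval_mul, eval_add, eval_sub, eval_C, eval_X, eval_one] at hrec
  have hzA' : z ^ (A - k) = z ^ (A - k - 1) * z := by
    rw [← Real.rpow_add_one hz₀.ne', sub_add_cancel]
  have hzB' : (1 - z) ^ (B - k) = (1 - z) ^ (B - k - 1) * (1 - z) := by
    rw [← Real.rpow_add_one hz₁', sub_add_cancel]
  simp only [rodriguesFun, Nat.cast_succ, ← sub_sub, hzA', hzB', Function.comp_apply,
    Pi.mul_apply]
  linear_combination -(z ^ (A - k - 1) * (1 - z) ^ (B - k - 1)) * hrec

lemma continuous_rodriguesFun {A B : ℝ} {k : ℕ} (hA : k ≤ A) (hB : k ≤ B) :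
    Continuous (rodriguesFun A B k) := by
  have hA' : 0 ≤ A - k := sub_nonneg.mpr hA
  have hB' : 0 ≤ B - k := sub_nonneg.mpr hB
  unfold rodriguesFun
  fun_prop (disch := assumption)

lemma rodriguesFun_zero {A : ℝ} (B : ℝ) {k : ℕ} (hA : k < A) : rodriguesFun A B k 0 = 0 := by
  rw [rodriguesFun, Real.zero_rpow (by linarith), zero_mul, zero_mul]

lemma rodriguesFun_one (A : ℝ) {B : ℝ} {k : ℕ} (hB : k < B) : rodriguesFun A B k 1 = 0 := by
  rw [rodriguesFun, sub_self, Real.zero_rpow (by linarith), mul_zero, zero_mul]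

lemma rodriguesFun_eq_zero_iff (A B : ℝ) (k : ℕ) {z : ℝ} (hz : z ∈ Ioo (0 : ℝ) 1) :
    rodriguesFun A B k z = 0 ↔ (rodriguesPoly A B k).IsRoot z := by
  have h₀ : z ^ (A - k) ≠ 0 := (Real.rpow_pos_of_pos hz.1 _).ne'
  have h₁ : (1 - z) ^ (B - k) ≠ 0 := (Real.rpow_pos_of_pos (sub_pos.mpr hz.2) _).ne'
  simp [rodriguesFun, h₀, h₁]

lemma card_le_card_add_one_of_hasDerivAt {f f' : ℝ → ℝ} {a b : ℝ} {s t : Finset ℝ}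
    (hf : ContinuousOn f (Icc a b)) (hf' : ∀ x ∈ Ioo a b, HasDerivAt f (f' x) x)
    (hs : ↑s ⊆ Icc a b) (hfs : ∀ x ∈ s, f x = 0) (ht : ∀ x ∈ Ioo a b, f' x = 0 → x ∈ t) :
    s.card ≤ t.card + 1 := by
  refine Finset.card_le_of_interleaved fun x hx y hy hxy _ => ?_
  have hIoo : Ioo x y ⊆ Ioo a b := Ioo_subset_Ioo (hs hx).1 (hs hy).2
  obtain ⟨z, hz, hz'⟩ := exists_hasDerivAt_eq_zero hxy
    (hf.mono (Icc_subset_Icc (hs hx).1 (hs hy).2)) (by rw [hfs x hx, hfs y hy])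
    fun z hz => hf' z (hIoo hz)
  exact ⟨z, ht z (hIoo hz) hz', hz⟩

noncomputable def rootsIoo (p : ℝ[X]) (a b : ℝ) : Finset ℝ :=
  {x ∈ p.roots.toFinset | x ∈ Ioo a b}

lemma mem_rootsIoo {p : ℝ[X]} {a b x : ℝ} :
    x ∈ rootsIoo p a b ↔ (p ≠ 0 ∧ p.IsRoot x) ∧ x ∈ Ioo a b := by
  rw [rootsIoo, Finset.mem_filter, Multiset.mem_toFinset, mem_roots']

lemma card_rootsIoo_rodriguesPoly_succ {A B : ℝ} {k : ℕ} (hA : k < A) (hB : k < B) :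
    (rootsIoo (rodriguesPoly A B k) 0 1).card + 1 ≤
      (rootsIoo (rodriguesPoly A B (k + 1)) 0 1).card := by
  set S := rootsIoo (rodriguesPoly A B k) 0 1
  have hne : rodriguesPoly A B (k + 1) ≠ 0 :=
    hypPoly_ne_zero (by push_cast; linarith) (by push_cast; linarith) _
  have h₀ : (0 : ℝ) ∉ insert 1 S := by simp [S, mem_rootsIoo]
  have h₁ : (1 : ℝ) ∉ S := by simp [S, mem_rootsIoo]
  have hs : ↑(insert 0 (insert 1 S)) ⊆ Icc (0 : ℝ) 1 := by
    intro x hx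
    simp only [Finset.coe_insert, mem_insert_iff, Finset.mem_coe] at hx
    rcases hx with rfl | rfl | hx
    · exact left_mem_Icc.mpr zero_le_one
    · exact right_mem_Icc.mpr zero_le_one
    · exact Ioo_subset_Icc_self (mem_rootsIoo.mp hx).2
  have hfs : ∀ x ∈ insert 0 (insert 1 S), rodriguesFun A B k x = 0 := by
    intro x hx
    simp only [Finset.mem_insert] at hx
    rcases hx with rfl | rfl | hx
    · exact rodriguesFun_zero B hA
    · exact rodriguesFun_one A hB
    · obtain ⟨⟨-, hroot⟩, hx⟩ := mem_rootsIoo.mp hx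
      exact (rodriguesFun_eq_zero_iff A B k hx).mpr hroot
  have ht : ∀ x ∈ Ioo (0 : ℝ) 1, (A - k) * rodriguesFun A B (k + 1) x = 0 →
      x ∈ rootsIoo (rodriguesPoly A B (k + 1)) 0 1 := fun x hx hzero =>
    mem_rootsIoo.mpr ⟨⟨hne, (rodriguesFun_eq_zero_iff A B (k + 1) hx).mp
      ((mul_eq_zero.mp hzero).resolve_left (sub_ne_zero.mpr hA.ne'))⟩, hx⟩
  have := card_le_card_add_one_of_hasDerivAt
    ((continuous_rodriguesFun hA.le hB.le).continuousOn)
    (fun x hx => hasDerivAt_rodriguesFun B hA hx) hs hfs ht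
  rw [Finset.card_insert_of_notMem h₀, Finset.card_insert_of_notMem h₁] at this
  omega

lemma le_card_rootsIoo_rodriguesPoly {A B : ℝ} {k : ℕ} (hA : k < A + 1) (hB : k < B + 1) :
    k ≤ (rootsIoo (rodriguesPoly A B k) 0 1).card := by
  induction k with
  | zero => exact Nat.zero_le _
  | succ k ih =>
    push_cast at hA hB
    have hstep := card_rootsIoo_rodriguesPoly_succ (A := A) (B := B) (k := k)
      (by linarith) (by linarith)
    have hk := ih (by linarith) (by linarith)
    omega

lemma roots_eq_of_natDegree_le_card {R : Type*} [CommRing R] [IsDomain R] {p : R[X]}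
    (hp : p ≠ 0) {S : Finset R} (hS : ∀ x ∈ S, p.IsRoot x) (hcard : p.natDegree ≤ S.card) :
    p.roots = S.val :=
  (Multiset.eq_of_le_of_card_le
    ((Multiset.le_iff_subset S.nodup).mpr fun x hx => (mem_roots hp).mpr (hS x hx))
    ((card_roots' p).trans hcard)).symm

/-- For `d > 0` and `b > d + n - 1`, the polynomial `₂F₁(-n, b; d; z)` has exactly `n`
zeros, all real, simple, and lying in the open interval `(0, 1)`:  viewed over `ℂ`, its
multiset of roots is exactly the image of a set of `n` distinct reals in `(0, 1)`. -/
theorem hyp_zeros_in_unit_interval (n : ℕ) (hn : 0 < n) (b d : ℝ)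
    (hd : 0 < d) (hb : b > d + n - 1) :
    ∃ S : Finset ℝ, S.card = n ∧ (∀ x ∈ S, x ∈ Set.Ioo (0 : ℝ) 1) ∧
      ((hypPoly n b d).map (algebraMap ℝ ℂ)).roots = S.val.map (fun x => (x : ℂ)) := by
  have hb₀ : 0 < b := by linarith [(Nat.one_le_cast (α := ℝ)).mpr hn]
  have hP : rodriguesPoly (d + n - 1) (b - d) n = hypPoly n b d := by
    rw [rodriguesPoly]; congr 1 <;> ring
  have hS := le_card_rootsIoo_rodriguesPoly (A := d + n - 1) (B := b - d) (k := n)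
    (by linarith) (by linarith)
  rw [hP] at hS
  set S := rootsIoo (hypPoly n b d) 0 1
  have hdeg : (hypPoly n b d).natDegree = n := natDegree_hypPoly hb₀ hd n
  have hroots : (hypPoly n b d).roots = S.val :=
    roots_eq_of_natDegree_le_card (hypPoly_ne_zero hb₀ hd n)
      (fun x hx => (mem_rootsIoo.mp hx).1.2) (hdeg.trans_le hS)
  have hcard : S.card = n :=
    le_antisymm (by simpa only [hroots, hdeg, Finset.card_val] using card_roots' (hypPoly n b d)) hS
  have hsplit : (hypPoly n b d).Splits :=
    splits_iff_card_roots.mpr (by rw [hroots, hdeg]; exact hcard)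
  refine ⟨S, hcard, fun x hx => (mem_rootsIoo.mp hx).2, ?_⟩
  simp [hsplit.roots_map, hroots]
end

section
/- Let a, c be real numbers with c > a > 0 and let m, n be positive integers with m ≥ n - 1. Then the polynomial Q_{mn}(z) = ₂F₁(-n, -a-m; -c-m-n+1; z) has no zeros in the closed unit disc |z| ≤ 1; in particular |Q_{mn}(z)| > 0 for every complex z with |z| < 1. -/
/-- The denominator polynomial `Q_{mn}(z) = ₂F₁(-n, -a-m; -c-m-n+1; z)` of the
`[m/n]` Padé approximant for `₂F₁(a, 1; c; z)`, as a function of a complex variable. -/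
noncomputable def padeDenomFun (m n : ℕ) (a c : ℝ) (z : ℂ) : ℂ :=
  ∑ k ∈ Finset.range (n + 1),
    (((poch (-(n : ℝ)) k * poch (-a - m) k) /
        (poch (-c - m - n + 1) k * (Nat.factorial k)) : ℝ) : ℂ) * z ^ k

open Polynomial Finset MeasureTheory Set

lemma sum_range_alternating_choose_mul_eval_eq_zero {R : Type*} [CommRing R] {n : ℕ} {p : R[X]}
    (hp : p.natDegree < n) :
    ∑ k ∈ range (n + 1), (-1 : R) ^ k * n.choose k * p.eval (k : R) = 0 := by
  have h := congrFun (fwdDiff_iter_eq_zero_of_degree_lt hp) 0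
  simp only [fwdDiff_iter_eq_sum_shift, zsmul_eq_mul, Int.cast_mul, Int.cast_pow, Int.cast_neg,
    Int.cast_one, Int.cast_natCast, zero_add, nsmul_eq_mul, mul_one, Pi.zero_apply] at h
  have hsign : ∀ k ∈ range (n + 1), (-1 : R) ^ k = (-1) ^ n * (-1) ^ (n - k) := by
    intro k hk
    obtain ⟨d, rfl⟩ := Nat.exists_eq_add_of_le (Nat.lt_succ_iff.mp (mem_range.mp hk))
    rw [Nat.add_sub_cancel_left, pow_add, mul_assoc, ← pow_add, ← two_mul, pow_mul]
    simp
  rw [sum_congr rfl fun k hk => by rw [hsign k hk, mul_assoc, mul_assoc], ← mul_sum]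
  simp only [← mul_assoc, h, mul_zero]

lemma Gamma_add_nat_eq_mul_poch {u : ℝ} (hu : 0 < u) (k : ℕ) :
    Real.Gamma (u + k) = Real.Gamma u * poch u k := by
  induction k with
  | zero => simp [poch]
  | succ k ih =>
    rw [Nat.cast_succ, ← add_assoc, Real.Gamma_add_one (by positivity), ih, poch, poch,
      prod_range_succ]
    ring

lemma poch_neg (x : ℝ) (k : ℕ) : poch (-x) k = (-1) ^ k * poch (x - k + 1) k := by
  rw [poch, poch, ← prod_range_reflect (fun i : ℕ => x - k + 1 + i),
    show (-1 : ℝ) ^ k = ∏ _i ∈ range k, (-1) by simp, ← prod_mul_distrib]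
  refine prod_congr rfl fun i hi => ?_
  rw [Nat.cast_sub (Nat.le_sub_one_of_lt (mem_range.mp hi)), Nat.cast_sub (by
    have := mem_range.mp hi; omega)]
  push_cast
  ring

lemma poch_neg_eq_mul_Gamma_div {x : ℝ} {k : ℕ} (hk : (k : ℝ) < x + 1) :
    poch (-x) k = (-1) ^ k * (Real.Gamma (x + 1) / Real.Gamma (x + 1 - k)) := by
  have h := Gamma_add_nat_eq_mul_poch (sub_pos.mpr hk) k
  rw [sub_add_cancel] at h
  rw [poch_neg, h, mul_div_cancel_left₀ _ (Real.Gamma_pos_of_pos (sub_pos.mpr hk)).ne']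
  ring_nf

lemma poch_neg_natCast {n k : ℕ} (hk : k ≤ n) :
    poch (-(n : ℝ)) k = (-1) ^ k * (k.factorial * n.choose k) := by
  rw [poch_neg_eq_mul_Gamma_div (by exact_mod_cast Nat.lt_succ_of_le hk), add_sub_right_comm,
    ← Nat.cast_sub hk, Real.Gamma_nat_eq_factorial, Real.Gamma_nat_eq_factorial,
    Nat.cast_choose ℝ hk]
  field_simp

lemma ofReal_rpow_mul_one_sub_rpow {s b t : ℝ} (ht : t ∈ Icc (0 : ℝ) 1) :
    ((t ^ s * (1 - t) ^ b : ℝ) : ℂ)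
      = (t : ℂ) ^ ((s + 1 : ℂ) - 1) * (1 - (t : ℂ)) ^ ((b + 1 : ℂ) - 1) := by
  rw [add_sub_cancel_right, add_sub_cancel_right, Complex.ofReal_mul,
    Complex.ofReal_cpow ht.1, Complex.ofReal_cpow (sub_nonneg.mpr ht.2), Complex.ofReal_sub,
    Complex.ofReal_one]

lemma intervalIntegrable_rpow_mul_one_sub_rpow {s b : ℝ} (hs : -1 < s) (hb : -1 < b) :
    IntervalIntegrable (fun t : ℝ => t ^ s * (1 - t) ^ b) volume 0 1 := by
  have h := Complex.betaIntegral_convergent (u := s + 1) (v := b + 1) (by simp; linarith)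
    (by simp; linarith)
  refine (intervalIntegrable_iff_integrableOn_Ioc_of_le zero_le_one).mpr ?_
  rw [intervalIntegrable_iff_integrableOn_Ioc_of_le zero_le_one] at h
  refine IntegrableOn.congr_fun h.re (fun t ht => ?_) measurableSet_Ioc
  rw [← ofReal_rpow_mul_one_sub_rpow (Ioc_subset_Icc_self ht)]
  exact Complex.ofReal_re _

lemma integral_rpow_mul_one_sub_rpow {s b : ℝ} (hs : -1 < s) (hb : -1 < b) :
    ∫ t in (0 : ℝ)..1, t ^ s * (1 - t) ^ b
      = Real.Gamma (s + 1) * Real.Gamma (b + 1) / Real.Gamma (s + b + 2) := by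
  apply Complex.ofReal_injective
  have h := Complex.betaIntegral_eq_Gamma_mul_div (s + 1) (b + 1) (by simp; linarith)
    (by simp; linarith)
  rw [Complex.betaIntegral] at h
  rw [← intervalIntegral.integral_ofReal, intervalIntegral.integral_congr
    (fun t ht => ofReal_rpow_mul_one_sub_rpow (by rwa [Set.uIcc_of_le zero_le_one] at ht)), h]
  push_cast [← Complex.Gamma_ofReal]
  ring_nf

noncomputable def weightedIntegral (W : ℝ → ℝ) (hW : IntervalIntegrable W volume 0 1) :
    ℝ[X] →ₗ[ℝ] ℝ where
  toFun p := ∫ t in (0 : ℝ)..1, p.eval t * W t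
  map_add' p q := by
    simp only [eval_add, add_mul]
    exact intervalIntegral.integral_add (hW.continuousOn_mul p.continuous.continuousOn)
      (hW.continuousOn_mul q.continuous.continuousOn)
  map_smul' r p := by
    simp only [eval_smul, smul_eq_mul, mul_assoc, intervalIntegral.integral_const_mul,
      RingHom.id_apply]

lemma weightedIntegral_apply {W : ℝ → ℝ} (hW : IntervalIntegrable W volume 0 1) (p : ℝ[X]) :
    weightedIntegral W hW p = ∫ t in (0 : ℝ)..1, p.eval t * W t := rfl

lemma weightedIntegral_pos {W : ℝ → ℝ} (hW : IntervalIntegrable W volume 0 1)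
    (hWpos : ∀ t ∈ Ioo (0 : ℝ) 1, 0 < W t) {p : ℝ[X]} (hp : p ≠ 0)
    (hp_nonneg : ∀ t ∈ Icc (0 : ℝ) 1, 0 ≤ p.eval t) : 0 < weightedIntegral W hW p := by
  have hint := hW.continuousOn_mul p.continuous.continuousOn
  have hnonneg : 0 ≤ᵐ[volume.restrict (uIoc 0 1)] fun t => p.eval t * W t := by
    rw [uIoc_of_le zero_le_one]
    refine ae_restrict_of_ae_eq_of_ae_restrict Ioo_ae_eq_Ioc ?_
    filter_upwards [ae_restrict_mem measurableSet_Ioo] with t ht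
    exact mul_nonneg (hp_nonneg t (Ioo_subset_Icc_self ht)) (hWpos t ht).le
  have hsupp :
      Set.Ioo 0 1 \ p.rootSet ℝ ⊆ Function.support (fun t => p.eval t * W t) ∩ Ioc 0 1 := by
    rintro t ⟨ht, hroot⟩
    refine ⟨mul_ne_zero (fun h => hroot ?_) (hWpos t ht).ne', Ioo_subset_Ioc_self ht⟩
    exact (mem_rootSet_of_ne hp).mpr (by simpa using h)
  rw [weightedIntegral_apply, intervalIntegral.integral_pos_iff_support_of_nonneg_ae' hnonneg hint]
  refine ⟨zero_lt_one, lt_of_lt_of_le ?_ (measure_mono hsupp)⟩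
  rw [measure_sdiff_null ((p.rootSet_finite ℝ).measure_zero volume), Real.volume_Ioo]
  norm_num

lemma weightedIntegral_X_pow {α β : ℝ} (hα : -1 < α) (hβ : -1 < β)
    (hW : IntervalIntegrable (fun t : ℝ => t ^ α * (1 - t) ^ β) volume 0 1) (r : ℕ) :
    weightedIntegral _ hW (X ^ r)
      = Real.Gamma (α + r + 1) * Real.Gamma (β + 1) / Real.Gamma (α + r + β + 2) := by
  rw [weightedIntegral_apply,
    ← integral_rpow_mul_one_sub_rpow (by linarith [r.cast_nonneg (α := ℝ)]) hβ]
  refine intervalIntegral.integral_congr_ae (ae_of_all _ fun t ht => ?_)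
  rw [uIoc_of_le zero_le_one] at ht
  rw [eval_pow, eval_X, Real.rpow_add ht.1, Real.rpow_natCast]
  ring

lemma LinearMap.map_mul_eq_zero_of_forall_mul_X_pow {R M : Type*} [CommSemiring R] [AddCommMonoid M]
    [Module R M] (L : R[X] →ₗ[R] M) {P : R[X]} {n : ℕ} (h : ∀ j < n, L (P * X ^ j) = 0)
    {S : R[X]} (hS : S.natDegree < n) : L (P * S) = 0 := by
  rw [S.as_sum_range_C_mul_X_pow' hS, mul_sum, map_sum]
  refine sum_eq_zero fun j hj => ?_
  rw [mul_left_comm, C_mul', map_smul, h j (Finset.mem_range.mp hj), smul_zero]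

lemma exists_eq_map_ofReal_add_I_mul (R : ℂ[X]) :
    ∃ R₁ R₂ : ℝ[X], R₁.natDegree ≤ R.natDegree ∧ R₂.natDegree ≤ R.natDegree ∧
      R = R₁.map Complex.ofRealHom + C Complex.I * R₂.map Complex.ofRealHom := by
  refine ⟨∑ k ∈ range (R.natDegree + 1), C (R.coeff k).re * X ^ k,
    ∑ k ∈ range (R.natDegree + 1), C (R.coeff k).im * X ^ k, ?_, ?_, ?_⟩
  · exact natDegree_sum_le_of_forall_le _ _ fun k hk =>
      (natDegree_C_mul_X_pow_le _ _).trans (Nat.lt_succ_iff.mp (Finset.mem_range.mp hk))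
  · exact natDegree_sum_le_of_forall_le _ _ fun k hk =>
      (natDegree_C_mul_X_pow_le _ _).trans (Nat.lt_succ_iff.mp (Finset.mem_range.mp hk))
  · conv_lhs => rw [R.as_sum_range_C_mul_X_pow]
    simp only [Polynomial.map_sum, Polynomial.map_mul, Polynomial.map_pow, map_C, map_X, mul_sum,
      ← sum_add_distrib, ← mul_assoc, ← C_mul, ← add_mul, ← C_add]
    refine sum_congr rfl fun k _ => ?_
    rw [Complex.ofRealHom_eq_coe, Complex.ofRealHom_eq_coe, mul_comm Complex.I, Complex.re_add_im]

lemma map_ofReal_add_I_mul_inj {A B A' B' : ℝ[X]}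
    (h : A.map Complex.ofRealHom + C Complex.I * B.map Complex.ofRealHom
      = A'.map Complex.ofRealHom + C Complex.I * B'.map Complex.ofRealHom) : A = A' ∧ B = B' := by
  have hk : ∀ k, (A.coeff k : ℂ) + Complex.I * B.coeff k = A'.coeff k + Complex.I * B'.coeff k :=
    fun k => by simpa [coeff_C_mul] using congrArg (coeff · k) h
  constructor <;> ext k
  · simpa using congrArg Complex.re (hk k)
  · simpa using congrArg Complex.im (hk k)

lemma Polynomial.mul_self_add_mul_self_eq_zero {p q : ℝ[X]} :
    p * p + q * q = 0 ↔ p = 0 ∧ q = 0 := by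
  refine ⟨fun h => ?_, by rintro ⟨rfl, rfl⟩; simp⟩
  have hzero : ∀ t, p.eval t = 0 ∧ q.eval t = 0 := fun t => by
    rw [← _root_.mul_self_add_mul_self_eq_zero, ← eval_mul, ← eval_mul, ← eval_add, h, eval_zero]
  exact ⟨funext fun t => by rw [(hzero t).1, eval_zero],
    funext fun t => by rw [(hzero t).2, eval_zero]⟩

/-- `R₁ + i R₂` is `P / (X - w)`; multiplying `P = (X - w) (R₁ + i R₂)` by `R₁ - i R₂` and
separating real and imaginary parts gives the two identities. -/
lemma exists_cofactors_of_aeval_eq_zero {P : ℝ[X]} (hP : P ≠ 0) {w : ℂ} (hw : aeval w P = 0) :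
    ∃ R₁ R₂ : ℝ[X], R₁.natDegree < P.natDegree ∧ R₂.natDegree < P.natDegree ∧
      (R₁ ≠ 0 ∨ R₂ ≠ 0) ∧ P * R₁ = (X - C w.re) * (R₁ * R₁ + R₂ * R₂) ∧
      C w.im * (R₁ * R₁ + R₂ * R₂) = P * R₂ := by
  have hroot : (P.map Complex.ofRealHom).IsRoot w := by
    rw [IsRoot, eval_map]
    exact hw
  obtain ⟨R, hfac⟩ : ∃ R, (X - C w) * R = P.map Complex.ofRealHom :=
    ⟨_, mul_divByMonic_eq_iff_isRoot.mpr hroot⟩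
  have hR0 : R ≠ 0 := by
    rintro hR
    rw [hR, mul_zero, eq_comm, Polynomial.map_eq_zero_iff Complex.ofReal_injective] at hfac
    exact hP hfac
  have hRdeg : R.natDegree < P.natDegree := by
    have h := congrArg natDegree hfac
    rw [natDegree_mul (X_sub_C_ne_zero w) hR0, natDegree_X_sub_C,
      natDegree_map_eq_of_injective Complex.ofReal_injective] at h
    omega
  obtain ⟨R₁, R₂, hR₁, hR₂, hR⟩ := exists_eq_map_ofReal_add_I_mul R
  refine ⟨R₁, R₂, hR₁.trans_lt hRdeg, hR₂.trans_lt hRdeg, ?_, map_ofReal_add_I_mul_inj ?_⟩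
  · by_contra! h
    exact hR0 (by rw [hR, h.1, h.2]; simp)
  have hI : (C Complex.I * C Complex.I : ℂ[X]) = -1 := by
    rw [← C_mul, Complex.I_mul_I, C_neg, C_1]
  have hw : C w = C (w.re : ℂ) + C Complex.I * C (w.im : ℂ) := by
    rw [← C_mul, ← C_add, mul_comm, Complex.re_add_im]
  simp only [Polynomial.map_mul, Polynomial.map_add, Polynomial.map_sub, map_X, map_C,
    Complex.ofRealHom_eq_coe, ← hfac, hR, hw]
  linear_combination (C Complex.I * C (w.im : ℂ) - (X - C (w.re : ℂ)))
    * R₂.map Complex.ofRealHom ^ 2 * hI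

theorem exists_mem_Ioo_eq_of_aeval_eq_zero (L : ℝ[X] →ₗ[ℝ] ℝ)
    (hL : ∀ p : ℝ[X], p ≠ 0 → (∀ t ∈ Icc (0 : ℝ) 1, 0 ≤ p.eval t) → 0 < L p) {P : ℝ[X]}
    (hP : P ≠ 0) (horth : ∀ S : ℝ[X], S.natDegree < P.natDegree → L (P * S) = 0) {w : ℂ}
    (hw : aeval w P = 0) : ∃ x ∈ Ioo (0 : ℝ) 1, w = x := by
  obtain ⟨R₁, R₂, hR₁, hR₂, hR, hPR₁, hPR₂⟩ := exists_cofactors_of_aeval_eq_zero hP hw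
  set G := R₁ * R₁ + R₂ * R₂
  have hG0 : G ≠ 0 := by
    rw [Ne, mul_self_add_mul_self_eq_zero]
    tauto
  have hG_nonneg : ∀ t, 0 ≤ G.eval t := fun t => by
    rw [eval_add, eval_mul, eval_mul]
    exact add_nonneg (mul_self_nonneg _) (mul_self_nonneg _)
  have hLG : 0 < L G := hL G hG0 fun t _ => hG_nonneg t
  have hLXG : 0 < L (X * G) := hL _ (mul_ne_zero X_ne_zero hG0) fun t ht => by
    rw [eval_mul, eval_X]
    exact mul_nonneg ht.1 (hG_nonneg t)
  have hL1XG : 0 < L ((1 - X) * G) := by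
    refine hL _ (mul_ne_zero ?_ hG0) fun t ht => ?_
    · rw [← neg_sub, neg_ne_zero, ← C_1]
      exact X_sub_C_ne_zero 1
    · rw [eval_mul, eval_sub, eval_one, eval_X]
      exact mul_nonneg (sub_nonneg.mpr ht.2) (hG_nonneg t)
  have him : w.im * L G = 0 := by
    have h := horth R₂ hR₂
    rwa [← hPR₂, C_mul', map_smul, smul_eq_mul] at h
  have hre : L (X * G) = w.re * L G := by
    have h := horth R₁ hR₁
    rwa [hPR₁, sub_mul, map_sub, C_mul', map_smul, smul_eq_mul, sub_eq_zero] at h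
  rw [sub_mul, one_mul, map_sub, hre, ← one_sub_mul] at hL1XG
  rw [hre] at hLXG
  refine ⟨w.re, ⟨pos_of_mul_pos_left hLXG hLG.le, ?_⟩, Complex.ext rfl ?_⟩
  · linarith [pos_of_mul_pos_left hL1XG hLG.le]
  · simpa [hLG.ne'] using him

noncomputable def padeCoeff (m n : ℕ) (a c : ℝ) (k : ℕ) : ℝ :=
  (poch (-(n : ℝ)) k * poch (-a - m) k) / (poch (-c - m - n + 1) k * (Nat.factorial k))

/-- Up to the factor `Γ(c - a)`, the left side is the `k`-th term of the `j`-th moment of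
`padeDenomRev`; the right side shows it is `(-1) ^ k C(n,k)` times a polynomial in `k` of degree
`n - 1`. -/
lemma padeCoeff_mul_Gamma_div_Gamma {a c : ℝ} (ha : 0 < a) (hc : 0 < c) {m n j k : ℕ}
    (hmn : n ≤ m + 1) (hj : j < n) (hk : k ≤ n) :
    padeCoeff m n a c k * (Real.Gamma (a + m + 1 + j - k) / Real.Gamma (c + m + 1 + j - k))
      = (-1) ^ k * n.choose k * (Real.Gamma (a + m + 1) / Real.Gamma (c + m + n))
        * (poch (a + m + 1 - k) j * poch (c + m + 1 + j - k) (n - 1 - j)) := by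
  have hkn : (k : ℝ) ≤ n := by exact_mod_cast hk
  have hnm : (n : ℝ) ≤ m + 1 := by exact_mod_cast hmn
  have hjn : (j : ℝ) + 1 ≤ n := by exact_mod_cast hj
  have hj0 : (0 : ℝ) ≤ j := j.cast_nonneg
  have hA : Real.Gamma (a + m + 1 + j - k)
      = Real.Gamma (a + m + 1 - k) * poch (a + m + 1 - k) j := by
    rw [← Gamma_add_nat_eq_mul_poch (by linarith)]
    ring_nf
  have hC : Real.Gamma (c + m + n - k)
      = Real.Gamma (c + m + 1 + j - k) * poch (c + m + 1 + j - k) (n - 1 - j) := by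
    rw [← Gamma_add_nat_eq_mul_poch (by linarith), Nat.cast_sub (by omega),
      Nat.cast_sub (by omega)]
    push_cast
    ring_nf
  rw [padeCoeff, poch_neg_natCast hk, show -a - m = -(a + m) by ring,
    poch_neg_eq_mul_Gamma_div (by linarith), show -c - m - n + 1 = -(c + m + n - 1) by ring,
    poch_neg_eq_mul_Gamma_div (by linarith), hA, show c + m + n - 1 + 1 = c + m + n by ring, hC]
  have := Real.Gamma_pos_of_pos (show 0 < a + m + 1 - k by linarith)
  have := Real.Gamma_pos_of_pos (show 0 < c + m + 1 + j - k by linarith)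
  have := Real.Gamma_pos_of_pos (show 0 < c + m + n by linarith)
  have := k.factorial_pos
  field_simp

lemma exists_natDegree_le_eval_eq_poch_sub (u : ℝ) (r : ℕ) :
    ∃ p : ℝ[X], p.natDegree ≤ r ∧ ∀ x, p.eval x = poch (u - x) r := by
  refine ⟨∏ i ∈ range r, (C (u + i) - X), ?_, fun x => ?_⟩
  · refine (natDegree_prod_le _ _).trans ?_
    simpa using sum_le_card_nsmul (range r) _ 1 fun i _ => (natDegree_sub_le _ _).trans (by simp)
  · simp only [eval_prod, eval_sub, eval_C, eval_X, poch]
    exact prod_congr rfl fun i _ => by ring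

lemma sum_padeCoeff_mul_Gamma_div_Gamma_eq_zero {a c : ℝ} (ha : 0 < a) (hc : 0 < c) {m n j : ℕ}
    (hmn : n ≤ m + 1) (hj : j < n) :
    ∑ k ∈ range (n + 1), padeCoeff m n a c k
      * (Real.Gamma (a + m + 1 + j - k) / Real.Gamma (c + m + 1 + j - k)) = 0 := by
  obtain ⟨p, hp, hpeval⟩ := exists_natDegree_le_eval_eq_poch_sub (a + m + 1) j
  obtain ⟨q, hq, hqeval⟩ := exists_natDegree_le_eval_eq_poch_sub (c + m + 1 + j) (n - 1 - j)
  have hpq : (p * q).natDegree < n := natDegree_mul_le.trans_lt (by omega)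
  rw [sum_congr rfl fun k hk => padeCoeff_mul_Gamma_div_Gamma ha hc hmn hj
    (Nat.lt_succ_iff.mp (Finset.mem_range.mp hk))]
  have h := sum_range_alternating_choose_mul_eval_eq_zero hpq
  simp only [eval_mul, hpeval, hqeval] at h
  rw [← mul_zero (Real.Gamma (a + m + 1) / Real.Gamma (c + m + n)), ← h, mul_sum]
  exact sum_congr rfl fun k _ => by ring

/-- `t ^ n Q_{mn}(1/t)`; up to normalisation, the Jacobi polynomial of degree `n` on `(0, 1)` for
the weight `t ^ (a+m-n) (1-t) ^ (c-a-1)`. -/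
noncomputable def padeDenomRev (m n : ℕ) (a c : ℝ) : ℝ[X] :=
  ∑ k ∈ range (n + 1), C (padeCoeff m n a c k) * X ^ (n - k)

lemma natDegree_padeDenomRev_le (m n : ℕ) (a c : ℝ) : (padeDenomRev m n a c).natDegree ≤ n :=
  natDegree_sum_le_of_forall_le _ _ fun k _ => (natDegree_C_mul_X_pow_le _ _).trans (Nat.sub_le n k)

lemma padeDenomRev_ne_zero (m n : ℕ) (a c : ℝ) : padeDenomRev m n a c ≠ 0 := by
  intro h
  have h := congrArg (coeff · n) h
  simp only [padeDenomRev, finsetSum_coeff, coeff_C_mul_X_pow, coeff_zero] at h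
  rw [sum_eq_single 0 (fun k hk hk0 => if_neg (by have := Finset.mem_range.mp hk; omega))
    (by simp)] at h
  simp [padeCoeff, poch] at h

lemma weightedIntegral_padeDenomRev_mul_X_pow {a c : ℝ} (ha : 0 < a) (hca : a < c) {m n j : ℕ}
    (hmn : n ≤ m + 1) (hj : j < n)
    (hW : IntervalIntegrable (fun t : ℝ => t ^ (a + m - n) * (1 - t) ^ (c - a - 1)) volume 0 1) :
    weightedIntegral _ hW (padeDenomRev m n a c * X ^ j) = 0 := by
  have hnm : (n : ℝ) ≤ m + 1 := by exact_mod_cast hmn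
  rw [padeDenomRev, sum_mul, map_sum, ← mul_zero (Real.Gamma (c - a)),
    ← sum_padeCoeff_mul_Gamma_div_Gamma_eq_zero ha (by linarith) hmn hj, mul_sum]
  refine sum_congr rfl fun k hk => ?_
  have hk : k ≤ n := Nat.lt_succ_iff.mp (Finset.mem_range.mp hk)
  rw [mul_assoc, ← pow_add, C_mul', map_smul, smul_eq_mul,
    weightedIntegral_X_pow (by linarith) (by linarith), Nat.cast_add, Nat.cast_sub hk,
    show a + m - n + (n - k + j) + 1 = a + m + 1 + j - k by ring,
    show a + m - n + (n - k + j) + (c - a - 1) + 2 = c + m + 1 + j - k by ring,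
    show c - a - 1 + 1 = c - a by ring]
  ring

lemma exists_mem_Ioo_eq_of_aeval_padeDenomRev_eq_zero {a c : ℝ} (ha : 0 < a) (hca : a < c)
    {m n : ℕ} (hmn : n ≤ m + 1) {w : ℂ} (hw : aeval w (padeDenomRev m n a c) = 0) :
    ∃ x ∈ Ioo (0 : ℝ) 1, w = x := by
  have hnm : (n : ℝ) ≤ m + 1 := by exact_mod_cast hmn
  have hW := intervalIntegrable_rpow_mul_one_sub_rpow (s := a + m - n) (b := c - a - 1)
    (by linarith) (by linarith)
  refine exists_mem_Ioo_eq_of_aeval_eq_zero (weightedIntegral _ hW)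
    (fun p hp hp_nonneg => weightedIntegral_pos hW (fun t ht => ?_) hp hp_nonneg)
    (padeDenomRev_ne_zero m n a c) (fun S hS => ?_) hw
  · exact mul_pos (Real.rpow_pos_of_pos ht.1 _) (Real.rpow_pos_of_pos (sub_pos.mpr ht.2) _)
  · exact LinearMap.map_mul_eq_zero_of_forall_mul_X_pow _
      (fun j hj => weightedIntegral_padeDenomRev_mul_X_pow ha hca hmn hj hW)
      (hS.trans_le (natDegree_padeDenomRev_le m n a c))

lemma sum_range_mul_pow_eq_pow_mul_sum_mul_inv_pow {K : Type*} [Field K] (f : ℕ → K) (n : ℕ)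
    {z : K} (hz : z ≠ 0) :
    ∑ k ∈ range (n + 1), f k * z ^ k = z ^ n * ∑ k ∈ range (n + 1), f k * z⁻¹ ^ (n - k) := by
  rw [mul_sum]
  refine sum_congr rfl fun k hk => ?_
  rw [← Nat.sub_add_cancel (Nat.lt_succ_iff.mp (Finset.mem_range.mp hk)), Nat.add_sub_cancel,
    pow_add, inv_pow]
  field_simp

lemma padeDenomFun_eq_pow_mul_aeval_padeDenomRev (m n : ℕ) (a c : ℝ) {z : ℂ} (hz : z ≠ 0) :
    padeDenomFun m n a c z = z ^ n * aeval z⁻¹ (padeDenomRev m n a c) := by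
  rw [padeDenomFun, sum_range_mul_pow_eq_pow_mul_sum_mul_inv_pow _ n hz, padeDenomRev]
  simp only [map_sum, map_mul, aeval_C, map_pow, aeval_X, Complex.coe_algebraMap, padeCoeff]

lemma padeDenomFun_zero (m n : ℕ) (a c : ℝ) : padeDenomFun m n a c 0 = 1 := by
  simp [padeDenomFun, sum_range_succ', poch]

theorem pade_denominator_nonzero_on_disc_general (a c : ℝ) (ha : 0 < a) (hca : a < c)
    (m n : ℕ) (hmn : n - 1 ≤ m) :
    (∀ z : ℂ, ‖z‖ ≤ 1 → padeDenomFun m n a c z ≠ 0) ∧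
    (∀ z : ℂ, ‖z‖ < 1 → 0 < ‖padeDenomFun m n a c z‖) := by
  have hne : ∀ z : ℂ, ‖z‖ ≤ 1 → padeDenomFun m n a c z ≠ 0 := by
    intro z hz hQ
    rcases eq_or_ne z 0 with rfl | hz0
    · simp [padeDenomFun_zero] at hQ
    rw [padeDenomFun_eq_pow_mul_aeval_padeDenomRev m n a c hz0, mul_eq_zero] at hQ
    obtain ⟨x, hx, hzx⟩ := exists_mem_Ioo_eq_of_aeval_padeDenomRev_eq_zero ha hca (by omega)
      (hQ.resolve_left (pow_ne_zero n hz0))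
    have h1 : 1 ≤ ‖z⁻¹‖ := by
      rw [norm_inv]
      exact one_le_inv₀ (norm_pos_iff.mpr hz0) |>.mpr hz
    rw [hzx, Complex.norm_real, Real.norm_of_nonneg hx.1.le] at h1
    exact hx.2.not_ge h1
  exact ⟨hne, fun z hz => norm_pos_iff.mpr (hne z hz.le)⟩

/-- For `c > a > 0` and `m ≥ n - 1`, the Padé denominator `Q_{mn}` has no zeros in the
closed unit disc `|z| ≤ 1`; in particular `|Q_{mn}(z)| > 0` for every `z` with `|z| < 1`. -/
theorem pade_denominator_nonzero_on_disc (a c : ℝ) (ha : 0 < a) (hca : a < c)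
    (m n : ℕ) (hm : 0 < m) (hn : 0 < n) (hmn : n - 1 ≤ m) :
    (∀ z : ℂ, ‖z‖ ≤ 1 → padeDenomFun m n a c z ≠ 0) ∧
    (∀ z : ℂ, ‖z‖ < 1 → 0 < ‖padeDenomFun m n a c z‖) :=
  pade_denominator_nonzero_on_disc_general a c ha hca m n hmn
end
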